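/- Let N be a PSD matrix on I0⊗I1⊗O1⊗O0 (each factor ℂ²) such that N commutes with U_{I1} for every 2×2 unitary U (U acting as U on the factor I1 and as the identity elsewhere), and such that Tr_{I1 O1}[N (J_id^T ⊗ I_{I0 O0})] ≤ 2 · J_id^{I0 O0} in the Loewner order. Then there exists a PSD 2×2 matrix σ such that N = (J_id^{I0 O0}/2) ⊗ σ^{O1} ⊗ (I_{I1}/2), i.e., N is the product of the normalized maximally entangled operator on the pair (I0, O0), the matrix σ on O1, and the maximally mixed state on I1. -/

import Mathlib

/-!
Commuting with `Z` on `I1` makes `N` block diagonal in `I1`, and commuting with `X` makes the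
two blocks equal, so `N = I_{I1} ⊗ M` with `M ≥ 0` on `(I0 O0) O1`, and the constraint reads
`Tr_{O1} M ≤ 2 J_id`. Every `v` on `I0 O0` orthogonal to `φ⁺` (i.e. `∑ᵢ v (i, i) = 0`) has
`⟨v, J_id v⟩ = 0`, hence `⟨v, Tr_{O1} M v⟩ ≤ 0`; as this is a sum of the nonnegative numbers
`⟨v ⊗ e_b, M (v ⊗ e_b)⟩`, positivity of `M` gives `M (v ⊗ e_b) = 0`. So `M = |φ⁺⟩⟨φ⁺| ⊗ τ`.
-/

open Matrix Finset
open scoped ComplexOrder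

noncomputable section

/-- Choi matrix of (the unitary channel induced by) a square matrix `U`. -/
def choi {n : ℕ} (U : Matrix (Fin n) (Fin n) ℂ) :
    Matrix (Fin n × Fin n) (Fin n × Fin n) ℂ :=
  fun p q => U p.2 p.1 * star (U q.2 q.1)

/-- Index type for one-slot combs: `I0 × I1 × O1 × O0`. -/
abbrev Ix1 (d0 d : ℕ) := Fin d0 × Fin d × Fin d × Fin d0

/-- `Tr_{I1 O1}[N (Jᵀ ⊗ I_{I0 O0})]`: action of a one-slot comb on a Choi matrix. -/
def act1 {d0 d : ℕ} (S : Matrix (Ix1 d0 d) (Ix1 d0 d) ℂ)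
    (J : Matrix (Fin d × Fin d) (Fin d × Fin d) ℂ) :
    Matrix (Fin d0 × Fin d0) (Fin d0 × Fin d0) ℂ :=
  fun x y => ∑ a, ∑ b, ∑ a', ∑ b',
    S (x.1, a, b, x.2) (y.1, a', b', y.2) * J (a, b) (a', b')

/-- `V` acting on the factor `I1` (and trivially elsewhere) of `I0 × I1 × O1 × O0`. -/
def onI1 (V : Matrix (Fin 2) (Fin 2) ℂ) : Matrix (Ix1 2 2) (Ix1 2 2) ℂ :=
  fun x y => (if x.1 = y.1 then 1 else 0) * V x.2.1 y.2.1 *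
    (if x.2.2.1 = y.2.2.1 then 1 else 0) * (if x.2.2.2 = y.2.2.2 then 1 else 0)

namespace Matrix

variable {α β 𝕜 : Type*} [Fintype α] [Fintype β] [RCLike 𝕜]

def partialTraceRight (M : Matrix (α × β) (α × β) 𝕜) : Matrix α α 𝕜 :=
  fun x y => ∑ b, M (x, b) (y, b)

theorem PosSemidef.sum_apply_mul_eq_zero_of_partialTraceRight {M : Matrix (α × β) (α × β) 𝕜}
    (hM : M.PosSemidef) {v : α → 𝕜} (hv : star v ⬝ᵥ M.partialTraceRight *ᵥ v ≤ 0)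
    (z : α × β) (b : β) : ∑ y, M z (y, b) * v y = 0 := by
  classical
  let w : β → α × β → 𝕜 := fun b p => if p.2 = b then v p.1 else 0
  have hw_form (b : β) :
      star (w b) ⬝ᵥ M *ᵥ w b = ∑ x, ∑ y, star (v x) * (M (x, b) (y, b) * v y) := by
    simp [w, dotProduct, mulVec, Fintype.sum_prod_type, apply_ite star, Finset.mul_sum]
  have hsum : star v ⬝ᵥ M.partialTraceRight *ᵥ v = ∑ b, star (w b) ⬝ᵥ M *ᵥ w b := by
    simp only [hw_form]
    simp only [dotProduct, mulVec, partialTraceRight, Pi.star_apply, Finset.sum_mul,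
      Finset.mul_sum]
    rw [Finset.sum_comm (s := Finset.univ (α := β))]
    refine Finset.sum_congr rfl fun x _ => ?_
    exact Finset.sum_comm
  have hnonneg (b : β) : 0 ≤ star (w b) ⬝ᵥ M *ᵥ w b := hM.dotProduct_mulVec_nonneg (w b)
  have hw : star (w b) ⬝ᵥ M *ᵥ w b = 0 :=
    (Finset.sum_eq_zero_iff_of_nonneg fun b _ => hnonneg b).mp
      (le_antisymm (hsum ▸ hv) (Finset.sum_nonneg fun b _ => hnonneg b)) b (Finset.mem_univ b)
  simpa [w, mulVec, dotProduct, Fintype.sum_prod_type] using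
    congrFun ((hM.dotProduct_mulVec_zero_iff (w b)).mp hw) z

end Matrix

theorem dotProduct_choi_one_mulVec {n : ℕ} (v : Fin n × Fin n → ℂ) :
    star v ⬝ᵥ choi 1 *ᵥ v = star (∑ i, v (i, i)) * ∑ i, v (i, i) := by
  simp [choi, dotProduct, mulVec, one_apply, Fintype.sum_prod_type, Finset.mul_sum,
    Finset.sum_mul, star_sum]
  exact Finset.sum_comm

section ChoiKernel

variable {n : ℕ} {β : Type*} [Fintype β]
  {M : Matrix ((Fin n × Fin n) × β) ((Fin n × Fin n) × β) ℂ} {c : ℂ}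

theorem sum_apply_mul_eq_zero_of_le_smul_choi_one (hM : M.PosSemidef)
    (hc : (c • choi 1 - M.partialTraceRight).PosSemidef) {v : Fin n × Fin n → ℂ}
    (hv : ∑ i, v (i, i) = 0) (z : (Fin n × Fin n) × β) (b : β) :
    ∑ y, M z (y, b) * v y = 0 := by
  refine hM.sum_apply_mul_eq_zero_of_partialTraceRight ?_ z b
  have := hc.dotProduct_mulVec_nonneg v
  rwa [sub_mulVec, dotProduct_sub, smul_mulVec, dotProduct_smul, dotProduct_choi_one_mulVec, hv,
    mul_zero, smul_zero, zero_sub, neg_nonneg] at this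

theorem apply_right_eq_ite_of_le_smul_choi_one (hM : M.PosSemidef)
    (hc : (c • choi 1 - M.partialTraceRight).PosSemidef) (z : (Fin n × Fin n) × β)
    (y : Fin n × Fin n) (b : β) (k : Fin n) :
    M z (y, b) = if y.1 = y.2 then M z ((k, k), b) else 0 := by
  classical
  obtain ⟨i, j⟩ := y
  split_ifs with hij
  · obtain rfl : i = j := hij
    have := sum_apply_mul_eq_zero_of_le_smul_choi_one hM hc
      (v := Pi.single (i, i) 1 - Pi.single (k, k) 1) (by simp [Pi.single_apply]) z b
    simpa [mul_sub, Pi.single_apply, sub_eq_zero] using this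
  · have := sum_apply_mul_eq_zero_of_le_smul_choi_one hM hc
      (v := Pi.single (i, j) 1) (by simpa [Pi.single_apply, Prod.ext_iff] using hij) z b
    simpa [Pi.single_apply] using this

theorem apply_eq_ite_of_le_smul_choi_one (hM : M.PosSemidef)
    (hc : (c • choi 1 - M.partialTraceRight).PosSemidef) (x y : Fin n × Fin n) (b b' : β)
    (k : Fin n) :
    M (x, b) (y, b') = if x.1 = x.2 ∧ y.1 = y.2 then M ((k, k), b) ((k, k), b') else 0 := by
  have hcol := apply_right_eq_ite_of_le_smul_choi_one hM hc
  have hrow (w : (Fin n × Fin n) × β) : M (x, b) w = if x.1 = x.2 then M ((k, k), b) w else 0 := by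
    rw [← hM.1.apply (x, b) w, hcol w x b k]
    split_ifs <;> simp [hM.1.apply]
  rw [hrow, hcol _ y b' k]
  split_ifs <;> tauto

end ChoiKernel

theorem mul_onI1_apply (N : Matrix (Ix1 2 2) (Ix1 2 2) ℂ) (V : Matrix (Fin 2) (Fin 2) ℂ)
    (x y : Ix1 2 2) : (N * onI1 V) x y = ∑ c, N x (y.1, c, y.2.2) * V c y.2.1 := by
  simp [onI1, mul_apply, Fintype.sum_prod_type]

theorem onI1_mul_apply (N : Matrix (Ix1 2 2) (Ix1 2 2) ℂ) (V : Matrix (Fin 2) (Fin 2) ℂ)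
    (x y : Ix1 2 2) : (onI1 V * N) x y = ∑ c, V x.2.1 c * N (x.1, c, x.2.2) y := by
  simp [onI1, mul_apply, Fintype.sum_prod_type]

theorem apply_eq_zero_of_commute_onI1_pauliZ {N : Matrix (Ix1 2 2) (Ix1 2 2) ℂ}
    (h : N * onI1 !![1, 0; 0, -1] = onI1 !![1, 0; 0, -1] * N) {x y : Ix1 2 2}
    (hxy : x.2.1 ≠ y.2.1) : N x y = 0 := by
  have hxy' := congrFun (congrFun h x) y
  rw [mul_onI1_apply, onI1_mul_apply] at hxy'
  obtain ⟨x0, a, x2⟩ := x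
  obtain ⟨y0, a', y2⟩ := y
  fin_cases a <;> fin_cases a' <;>
    simp [Fin.sum_univ_two, self_eq_neg, neg_eq_self] at hxy hxy' ⊢ <;> assumption

theorem apply_flip_eq_of_commute_onI1_pauliX {N : Matrix (Ix1 2 2) (Ix1 2 2) ℂ}
    (h : N * onI1 !![0, 1; 1, 0] = onI1 !![0, 1; 1, 0] * N) (x y : Ix1 2 2) :
    N x (y.1, y.2.1 + 1, y.2.2) = N (x.1, x.2.1 + 1, x.2.2) y := by
  have hxy := congrFun (congrFun h x) y
  rw [mul_onI1_apply, onI1_mul_apply] at hxy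
  obtain ⟨x0, a, x2⟩ := x
  obtain ⟨y0, a', y2⟩ := y
  fin_cases a <;> fin_cases a' <;> simpa [Fin.sum_univ_two] using hxy

theorem pauliZ_mem_unitaryGroup : !![(1 : ℂ), 0; 0, -1] ∈ unitaryGroup (Fin 2) ℂ := by
  rw [mem_unitaryGroup_iff]
  ext i j
  fin_cases i <;> fin_cases j <;> simp [mul_apply, Fin.sum_univ_two, star_apply, one_apply]

theorem pauliX_mem_unitaryGroup : !![(0 : ℂ), 1; 1, 0] ∈ unitaryGroup (Fin 2) ℂ := by
  rw [mem_unitaryGroup_iff]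
  ext i j
  fin_cases i <;> fin_cases j <;> simp [mul_apply, Fin.sum_univ_two, star_apply, one_apply]

theorem apply_eq_ite_of_commute_onI1 {N : Matrix (Ix1 2 2) (Ix1 2 2) ℂ}
    (hcomm : ∀ U ∈ unitaryGroup (Fin 2) ℂ, N * onI1 U = onI1 U * N)
    (i0 j0 a a' b b' o0 p0 : Fin 2) :
    N (i0, a, b, o0) (j0, a', b', p0) = if a = a' then N (i0, 0, b, o0) (j0, 0, b', p0) else 0 := by
  split_ifs with haa'
  · subst haa'
    fin_cases a
    · rfl
    · simpa using (apply_flip_eq_of_commute_onI1_pauliX (hcomm _ pauliX_mem_unitaryGroup)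
        (i0, 0, b, o0) (j0, 1, b', p0)).symm
  · exact apply_eq_zero_of_commute_onI1_pauliZ (hcomm _ pauliZ_mem_unitaryGroup) haa'

def blockI1Zero (N : Matrix (Ix1 2 2) (Ix1 2 2) ℂ) :
    Matrix ((Fin 2 × Fin 2) × Fin 2) ((Fin 2 × Fin 2) × Fin 2) ℂ :=
  N.submatrix (fun p => (p.1.1, 0, p.2, p.1.2)) (fun p => (p.1.1, 0, p.2, p.1.2))

theorem act1_choi_one_eq_partialTraceRight {N : Matrix (Ix1 2 2) (Ix1 2 2) ℂ}
    (hN : ∀ i0 j0 a a' b b' o0 p0 : Fin 2,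
      N (i0, a, b, o0) (j0, a', b', p0) = if a = a' then N (i0, 0, b, o0) (j0, 0, b', p0) else 0) :
    act1 N (choi 1) = (blockI1Zero N).partialTraceRight := by
  ext x y
  simp [act1, choi, one_apply, blockI1Zero, partialTraceRight, Fin.sum_univ_two, hN _ _ 1 1,
    hN _ _ 0 1, hN _ _ 1 0]

/-- Note `J_id = choi 1` and `J_idᵀ = J_id`. -/
theorem covariant_draw_factorizes
    (N : Matrix (Ix1 2 2) (Ix1 2 2) ℂ) (hN : N.PosSemidef)
    (hcomm : ∀ U ∈ Matrix.unitaryGroup (Fin 2) ℂ, N * onI1 U = onI1 U * N)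
    (hDraw : ((2 : ℂ) • choi (1 : Matrix (Fin 2) (Fin 2) ℂ) -
      act1 N (choi (1 : Matrix (Fin 2) (Fin 2) ℂ))).PosSemidef) :
    ∃ σ : Matrix (Fin 2) (Fin 2) ℂ, σ.PosSemidef ∧
      ∀ (i0 j0 a a' b b' o0 p0 : Fin 2),
        N (i0, a, b, o0) (j0, a', b', p0) =
          (choi (1 : Matrix (Fin 2) (Fin 2) ℂ) (i0, o0) (j0, p0) / 2) * σ b b' *
            (if a = a' then ((2 : ℂ))⁻¹ else 0) := by
  have hblock := apply_eq_ite_of_commute_onI1 hcomm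
  have hM : (blockI1Zero N).PosSemidef := hN.submatrix _
  rw [act1_choi_one_eq_partialTraceRight hblock] at hDraw
  -- `J_id (0,0) (0,0) / 2 * 2⁻¹ = 1 / 4`
  refine ⟨(4 : ℂ) • (blockI1Zero N).submatrix (fun b => ((0, 0), b)) (fun b => ((0, 0), b)),
    (hM.submatrix _).smul (by norm_num), fun i0 j0 a a' b b' o0 p0 => ?_⟩
  have hfac := apply_eq_ite_of_le_smul_choi_one hM hDraw (i0, o0) (j0, p0) b b' 0
  simp only [blockI1Zero, submatrix_apply] at hfac
  rw [hblock, hfac]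
  by_cases ha : a = a' <;> by_cases hi : i0 = o0 <;> by_cases hj : j0 = p0 <;>
    simp [ha, hi, hj, choi, one_apply, blockI1Zero, eq_comm]
  ring

end
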